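/- arXiv:2306.06114 — 2 statements merged into one kernel-verified Lean document; each statement's English description precedes it below -/
import Mathlib

section
/- A pseudo MV-algebra M with a square root r is Boolean subdirectly irreducible if and only if r is strict (i.e., r(0) = r(0)⁻). -/
/-- A pseudo MV-algebra `(M; ⊕, ⁻, ~, 0, 1)`: `+` plays the role of `⊕`, `lneg` of `⁻`
and `rneg` of `~`; the product is `x ⊙ y = (y⁻ ⊕ x⁻)~`. -/
class PMV (M : Type) extends Add M, Zero M, One M where
  lneg : M → M
  rneg : M → M
  add_assoc' : ∀ x y z : M, x + y + z = x + (y + z)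
  add_zero' : ∀ x : M, x + 0 = x
  zero_add' : ∀ x : M, 0 + x = x
  add_one' : ∀ x : M, x + 1 = 1
  one_add' : ∀ x : M, 1 + x = 1
  lneg_one : lneg 1 = 0
  rneg_one : rneg 1 = 0
  a5 : ∀ x y : M, rneg (lneg x + lneg y) = lneg (rneg x + rneg y)
  a6a : ∀ x y : M, x + rneg (lneg y + lneg (rneg x)) = y + rneg (lneg x + lneg (rneg y))
  a6b : ∀ x y : M, x + rneg (lneg y + lneg (rneg x)) = rneg (lneg (lneg y) + lneg x) + y
  a6c : ∀ x y : M, x + rneg (lneg y + lneg (rneg x)) = rneg (lneg (lneg x) + lneg y) + x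
  a7 : ∀ x y : M, rneg (lneg (lneg x + y) + lneg x) = rneg (lneg y + lneg (x + rneg y))
  a8a : ∀ x : M, rneg (lneg x) = x
  a8b : ∀ x : M, lneg (rneg x) = x

namespace PMV

variable {M : Type} [PMV M]

/-- `x ⊙ y = (y⁻ ⊕ x⁻)~`. -/
def mul (x y : M) : M := rneg (lneg y + lneg x)

/-- The lattice order of a pseudo MV-algebra: `x ≤ y ↔ x⁻ ⊕ y = 1`. -/
def le (x y : M) : Prop := lneg x + y = 1

/-- `x ∨ y = x ⊕ (x~ ⊙ y)`. -/
def sup (x y : M) : M := x + mul (rneg x) y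

/-- `x ∧ y = x ⊙ (x⁻ ⊕ y)`. -/
def inf (x y : M) : M := mul x (lneg x + y)

/-- The distance `d(x,y) = (x ⊙ y⁻) ⊕ (y ⊙ x⁻)`; `x/I = y/I` in `M/I` iff `d(x,y) ∈ I`. -/
def dist (x y : M) : M := mul x (lneg y) + mul y (lneg x)

/-- An ideal of a pseudo MV-algebra. -/
def IsIdeal (I : Set M) : Prop :=
  (0 : M) ∈ I ∧ (∀ x ∈ I, ∀ y ∈ I, x + y ∈ I) ∧ ∀ x y : M, le x y → y ∈ I → x ∈ I

/-- A normal ideal: `x ⊕ I = I ⊕ x` for every `x`. -/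
def IsNormal (I : Set M) : Prop :=
  ∀ x : M, {z | ∃ i ∈ I, z = x + i} = {z | ∃ i ∈ I, z = i + x}

/-- A square root on `M`: `r(x) ⊙ r(x) = x` and `y ⊙ y ≤ x → y ≤ r(x)`. -/
def IsSquareRoot (r : M → M) : Prop :=
  (∀ x : M, mul (r x) (r x) = x) ∧ ∀ x y : M, le (mul y y) x → le y (r x)

end PMV

/-- The product of two pseudo MV-algebras, componentwise. -/
instance Prod.instPMV (M N : Type) [PMV M] [PMV N] : PMV (M × N) where
  add p q := (p.1 + q.1, p.2 + q.2)
  zero := (0, 0)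
  one := (1, 1)
  lneg p := (PMV.lneg p.1, PMV.lneg p.2)
  rneg p := (PMV.rneg p.1, PMV.rneg p.2)
  add_assoc' x y z := Prod.ext (PMV.add_assoc' x.1 y.1 z.1) (PMV.add_assoc' x.2 y.2 z.2)
  add_zero' x := Prod.ext (PMV.add_zero' x.1) (PMV.add_zero' x.2)
  zero_add' x := Prod.ext (PMV.zero_add' x.1) (PMV.zero_add' x.2)
  add_one' x := Prod.ext (PMV.add_one' x.1) (PMV.add_one' x.2)
  one_add' x := Prod.ext (PMV.one_add' x.1) (PMV.one_add' x.2)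
  lneg_one := Prod.ext PMV.lneg_one PMV.lneg_one
  rneg_one := Prod.ext PMV.rneg_one PMV.rneg_one
  a5 x y := Prod.ext (PMV.a5 x.1 y.1) (PMV.a5 x.2 y.2)
  a6a x y := Prod.ext (PMV.a6a x.1 y.1) (PMV.a6a x.2 y.2)
  a6b x y := Prod.ext (PMV.a6b x.1 y.1) (PMV.a6b x.2 y.2)
  a6c x y := Prod.ext (PMV.a6c x.1 y.1) (PMV.a6c x.2 y.2)
  a7 x y := Prod.ext (PMV.a7 x.1 y.1) (PMV.a7 x.2 y.2)
  a8a x := Prod.ext (PMV.a8a x.1) (PMV.a8a x.2)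
  a8b x := Prod.ext (PMV.a8b x.1) (PMV.a8b x.2)

/-- A homomorphism of pseudo MV-algebras. -/
def IsPMVHom {M N : Type} [PMV M] [PMV N] (f : M → N) : Prop :=
  f 0 = 0 ∧ f 1 = 1 ∧ (∀ x y : M, f (x + y) = f x + f y) ∧
    (∀ x : M, f (PMV.lneg x) = PMV.lneg (f x)) ∧
    ∀ x : M, f (PMV.rneg x) = PMV.rneg (f x)

/-- `M` is Boolean subdirectly irreducible: for every injective homomorphism
`f : M → N₁ × N₂` with `N₁` a Boolean algebra (idempotent pseudo MV-algebra), the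
composite `π₂ ∘ f` is still injective. -/
def BooleanSubdirectlyIrreducible (M : Type) [PMV M] : Prop :=
  ∀ (N₁ N₂ : Type) [PMV N₁] [PMV N₂], (∀ x : N₁, x + x = x) →
    ∀ f : M → N₁ × N₂, IsPMVHom f → Function.Injective f →
      Function.Injective fun m => (f m).2


namespace PMV

variable {M : Type} [PMV M]

/-! ### Basic negation lemmas -/

theorem lr (x : M) : lneg (rneg x) = x := a8b x
theorem rl (x : M) : rneg (lneg x) = x := a8a x

theorem lneg_injective {x y : M} (h : lneg x = lneg y) : x = y := by
  have h2 := congrArg rneg h; rwa [rl, rl] at h2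

theorem lneg_zero : lneg (0 : M) = 1 := by rw [← rneg_one, lr]
theorem rneg_zero : rneg (0 : M) = 1 := by rw [← lneg_one, rl]

theorem mul_def (x y : M) : mul x y = rneg (lneg y + lneg x) := rfl
theorem mul_def' (x y : M) : mul x y = lneg (rneg y + rneg x) := a5 y x

theorem lneg_mul (x y : M) : lneg (mul x y) = lneg y + lneg x := by
  rw [mul_def, lr]
theorem rneg_mul (x y : M) : rneg (mul x y) = rneg y + rneg x := by
  rw [mul_def', rl]
theorem lneg_add (x y : M) : lneg (x + y) = mul (lneg y) (lneg x) := by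
  rw [mul_def', rl, rl]
theorem rneg_add (x y : M) : rneg (x + y) = mul (rneg y) (rneg x) := by
  rw [mul_def, lr, lr]

/-! ### Order basics -/

theorem add_rneg (x : M) : x + rneg x = 1 := by
  have h := a6a x 1
  rw [one_add'] at h
  rw [lneg_one] at h
  rw [zero_add'] at h
  rw [lr] at h
  exact h

theorem lneg_add_self (x : M) : lneg x + x = 1 := by
  have h := add_rneg (lneg x); rwa [rl] at h

theorem le_refl (x : M) : le x x := lneg_add_self x
theorem le_one (x : M) : le x 1 := add_one' (lneg x)
theorem zero_le (x : M) : le 0 x := by show lneg 0 + x = 1; rw [lneg_zero, one_add']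
theorem le_zero {x : M} (h : le x 0) : x = 0 := by
  have h' : lneg x = 1 := by have h2 : lneg x + 0 = 1 := h; rwa [add_zero'] at h2
  have h2 := congrArg rneg h'; rwa [rl, rneg_one] at h2

theorem sup_comm (x y : M) : sup x y = sup y x := a6a x y
theorem sup_eq_b (x y : M) : sup x y = mul x (lneg y) + y := a6b x y
theorem sup_eq_c (x y : M) : sup x y = mul y (lneg x) + x := a6c x y
theorem inf_eq_a7 (x y : M) : inf x y = mul (x + rneg y) y := a7 x y

theorem sup_eq_right {x y : M} (h : le x y) : sup x y = y := by
  have h' : lneg x + y = 1 := h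
  rw [sup_comm]
  show y + rneg (lneg x + lneg (rneg y)) = y
  rw [lr, h', rneg_one, add_zero']

theorem le_iff_rneg {x y : M} : le x y ↔ y + rneg x = 1 := by
  constructor
  · intro h
    have hs := sup_eq_c x y
    rw [sup_eq_right h] at hs
    calc y + rneg x = (mul y (lneg x) + x) + rneg x := by rw [← hs]
      _ = mul y (lneg x) + (x + rneg x) := add_assoc' _ _ _
      _ = mul y (lneg x) + 1 := by rw [add_rneg]
      _ = 1 := add_one' _
  · intro h
    have hmul : mul x (lneg y) = 0 := by
      rw [mul_def', rl, h, lneg_one]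
    have hs : sup x y = y := by rw [sup_eq_b, hmul, zero_add']
    show lneg x + y = 1
    rw [← hs]
    show lneg x + (x + mul (rneg x) y) = 1
    rw [← add_assoc', lneg_add_self, one_add']

theorem le_trans {x y z : M} (h1 : le x y) (h2 : le y z) : le x z := by
  have h1' : lneg x + y = 1 := h1
  show lneg x + z = 1
  have e2 : y + mul (rneg y) z = z := sup_eq_right h2
  calc lneg x + z = lneg x + (y + mul (rneg y) z) := by rw [e2]
    _ = (lneg x + y) + mul (rneg y) z := (add_assoc' _ _ _).symm
    _ = 1 + mul (rneg y) z := by rw [h1']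
    _ = 1 := one_add' _

theorem le_antisymm {x y : M} (h1 : le x y) (h2 : le y x) : x = y := by
  have h3 := sup_eq_right h1
  rw [sup_comm, sup_eq_right h2] at h3
  exact h3

theorem add_eq_one_iff {x y : M} : x + y = 1 ↔ le (lneg y) x := by
  rw [le_iff_rneg, rl]

theorem lneg_le_lneg {x y : M} (h : le x y) : le (lneg y) (lneg x) := by
  rw [le_iff_rneg, rl]; exact h

theorem rneg_le_rneg {x y : M} (h : le x y) : le (rneg y) (rneg x) := by
  show lneg (rneg y) + rneg x = 1
  rw [lr]
  exact le_iff_rneg.1 h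

theorem le_add_right (x s : M) : le x (x + s) := by
  show lneg x + (x + s) = 1
  rw [← add_assoc', lneg_add_self, one_add']

theorem le_add_left (x s : M) : le x (s + x) := by
  rw [le_iff_rneg, add_assoc', add_rneg, add_one']

theorem add_le_add_left {x y : M} (h : le x y) (z : M) : le (z + x) (z + y) := by
  have e : x + mul (rneg x) y = y := sup_eq_right h
  rw [← e, ← add_assoc']
  exact le_add_right _ _

theorem add_le_add_right {x y : M} (h : le x y) (z : M) : le (x + z) (y + z) := by
  have hs := sup_eq_c x y
  rw [sup_eq_right h] at hs
  rw [hs, add_assoc']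
  exact le_add_left _ _

theorem add_le_add {x y u v : M} (h1 : le x y) (h2 : le u v) : le (x + u) (y + v) :=
  le_trans (add_le_add_right h1 u) (add_le_add_left h2 y)

theorem mul_le_mul {x x' y y' : M} (h1 : le x x') (h2 : le y y') :
    le (mul x y) (mul x' y') := by
  rw [mul_def, mul_def]
  exact rneg_le_rneg (add_le_add (lneg_le_lneg h2) (lneg_le_lneg h1))

theorem mul_one (x : M) : mul x 1 = x := by rw [mul_def, lneg_one, zero_add', rl]
theorem one_mul (x : M) : mul 1 x = x := by rw [mul_def, lneg_one, add_zero', rl]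
theorem mul_zero (x : M) : mul x 0 = 0 := by rw [mul_def, lneg_zero, one_add', rneg_one]
theorem zero_mul (x : M) : mul 0 x = 0 := by rw [mul_def, lneg_zero, add_one', rneg_one]

theorem mul_le_left (x y : M) : le (mul x y) x := by
  have h := mul_le_mul (le_refl x) (le_one y); rwa [mul_one] at h
theorem mul_le_right (x y : M) : le (mul x y) y := by
  have h := mul_le_mul (le_one x) (le_refl y); rwa [one_mul] at h

theorem mul_assoc (x y z : M) : mul (mul x y) z = mul x (mul y z) := by
  rw [mul_def (mul x y) z, lneg_mul x y, mul_def x (mul y z), lneg_mul y z, add_assoc']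

end PMV

namespace PMV

variable {M : Type} [PMV M]

/-! ### Residuation -/

theorem R1 {x y z : M} : le (mul x y) z ↔ le y (lneg x + z) := by
  show lneg (mul x y) + z = 1 ↔ lneg y + (lneg x + z) = 1
  rw [lneg_mul, add_assoc']

theorem R2 {x y z : M} : le (mul x y) z ↔ le x (z + rneg y) := by
  constructor
  · intro h
    have h' : z + rneg (mul x y) = 1 := le_iff_rneg.1 h
    rw [rneg_mul, ← add_assoc'] at h'
    exact le_iff_rneg.2 h'
  · intro h
    have h' : (z + rneg y) + rneg x = 1 := le_iff_rneg.1 h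
    apply le_iff_rneg.2
    rw [rneg_mul, ← add_assoc']
    exact h'

theorem mul_lneg_self (x : M) : mul x (lneg x) = 0 := by
  rw [mul_def, lneg_add_self, rneg_one]

theorem rneg_mul_self (x : M) : mul (rneg x) x = 0 := by
  rw [mul_def, lr, lneg_add_self, rneg_one]

theorem mul_eq_zero_of_le_lneg {x y : M} (h : le y (lneg x)) : mul x y = 0 := by
  apply le_zero; rw [R1, add_zero']; exact h
theorem le_lneg_of_mul_eq_zero {x y : M} (h : mul x y = 0) : le y (lneg x) := by
  have h2 : le (mul x y) 0 := by rw [h]; exact le_refl 0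
  rwa [R1, add_zero'] at h2
theorem mul_eq_zero_of_le_rneg {x y : M} (h : le x (rneg y)) : mul x y = 0 := by
  apply le_zero; rw [R2, zero_add']; exact h
theorem le_rneg_of_mul_eq_zero {x y : M} (h : mul x y = 0) : le x (rneg y) := by
  have h2 : le (mul x y) 0 := by rw [h]; exact le_refl 0
  rwa [R2, zero_add'] at h2

/-! ### Lattice -/

theorem inf_le_left (x y : M) : le (inf x y) x := by
  have h := mul_le_mul (le_refl x) (le_one (lneg x + y))
  rwa [mul_one] at h

theorem lneg_sup_eq (u v : M) : lneg (sup u v) = inf (lneg v) (lneg u) := by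
  show lneg (u + mul (rneg u) v) = _
  rw [lneg_add, lneg_mul, lr, inf_eq_a7, rl]

theorem rneg_sup_eq (u v : M) : rneg (sup u v) = inf (rneg v) (rneg u) := by
  rw [sup_eq_b, rneg_add, rneg_mul, rl]
  show mul (rneg v) (v + rneg u) = mul (rneg v) (lneg (rneg v) + rneg u)
  rw [lr]

theorem inf_comm (x y : M) : inf x y = inf y x := by
  have h1 : inf y x = rneg (sup (lneg x) (lneg y)) := by
    rw [rneg_sup_eq, rl, rl]
  have h2 : inf x y = rneg (sup (lneg y) (lneg x)) := by
    rw [rneg_sup_eq, rl, rl]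
  rw [h1, h2, sup_comm]

theorem inf_le_right (x y : M) : le (inf x y) y := by
  rw [inf_comm]; exact inf_le_left y x
theorem le_sup_left (x y : M) : le x (sup x y) := le_add_right x _
theorem le_sup_right (x y : M) : le y (sup x y) := by
  rw [sup_comm]; exact le_sup_left y x

theorem sup_le {x y z : M} (hx : le x z) (hy : le y z) : le (sup x y) z := by
  have h1 : le (sup x y) (sup x z) := by
    show le (x + mul (rneg x) y) (x + mul (rneg x) z)
    exact add_le_add_left (mul_le_mul (le_refl _) hy) x
  rwa [sup_eq_right hx] at h1

theorem le_inf {x y z : M} (hx : le z x) (hy : le z y) : le z (inf x y) := by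
  have h := sup_le (lneg_le_lneg hx) (lneg_le_lneg hy)
  have h2 := rneg_le_rneg h
  rw [rl, rneg_sup_eq, rl, rl] at h2
  rwa [inf_comm] at h2

theorem inf_of_le_left {x y : M} (h : le x y) : inf x y = x :=
  le_antisymm (inf_le_left x y) (le_inf (le_refl x) h)
theorem inf_of_le_right {x y : M} (h : le y x) : inf x y = y := by
  rw [inf_comm]; exact inf_of_le_left h
theorem sup_of_le {x y : M} (h : le y x) : sup x y = x := by
  rw [sup_comm]; exact sup_eq_right h

theorem lneg_inf_eq (u v : M) : lneg (inf u v) = sup (lneg v) (lneg u) := by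
  have h : inf u v = rneg (sup (lneg v) (lneg u)) := by rw [rneg_sup_eq, rl, rl]
  rw [h, lr]
theorem rneg_inf_eq (u v : M) : rneg (inf u v) = sup (rneg v) (rneg u) := by
  have h : inf u v = lneg (sup (rneg v) (rneg u)) := by rw [lneg_sup_eq, lr, lr]
  rw [h, rl]

/-! ### Subdistributivity bounds -/

theorem V1 (x y z : M) : le (mul (x + y) z) (x + mul y z) := by
  rw [R1, lneg_add]
  have h1 : le z (lneg y + mul y z) := R1.1 (le_refl (mul y z))
  have h2 : le (lneg y) (mul (lneg y) (lneg x) + x) := by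
    have h := le_sup_left (lneg y) x; rwa [sup_eq_b] at h
  have h4 := le_trans h1 (add_le_add_right h2 (mul y z))
  rwa [add_assoc'] at h4

theorem V2 (x y z : M) : le (mul z (x + y)) (mul z x + y) := by
  rw [R2, rneg_add, add_assoc']
  have h1 : le z (mul z x + rneg x) := R2.1 (le_refl (mul z x))
  have h2 : le (rneg x) (y + mul (rneg y) (rneg x)) := le_sup_right y (rneg x)
  exact le_trans h1 (add_le_add_left h2 (mul z x))

theorem mul_sup_right (x y z : M) : mul (sup x y) z = sup (mul x z) (mul y z) := by
  apply le_antisymm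
  · rw [R2]
    exact sup_le (R2.1 (le_sup_left _ _)) (R2.1 (le_sup_right _ _))
  · exact sup_le (mul_le_mul (le_sup_left x y) (le_refl z))
      (mul_le_mul (le_sup_right x y) (le_refl z))

theorem inf_sup_distrib (w x y : M) : inf w (sup x y) = sup (inf w x) (inf w y) := by
  apply le_antisymm
  · rw [inf_comm]
    have hx : le (mul x (lneg (sup x y) + w)) (sup (inf w x) (inf w y)) := by
      have h1 : le (mul x (lneg (sup x y) + w)) (inf x w) :=
        mul_le_mul (le_refl x) (add_le_add_right (lneg_le_lneg (le_sup_left x y)) w)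
      rw [inf_comm] at h1
      exact le_trans h1 (le_sup_left _ _)
    have hy : le (mul y (lneg (sup x y) + w)) (sup (inf w x) (inf w y)) := by
      have h1 : le (mul y (lneg (sup x y) + w)) (inf y w) :=
        mul_le_mul (le_refl y) (add_le_add_right (lneg_le_lneg (le_sup_right x y)) w)
      rw [inf_comm] at h1
      exact le_trans h1 (le_sup_right _ _)
    show le (mul (sup x y) (lneg (sup x y) + w)) _
    rw [mul_sup_right]
    exact sup_le hx hy
  · exact sup_le (le_inf (inf_le_left w x) (le_trans (inf_le_right w x) (le_sup_left x y)))
      (le_inf (inf_le_left w y) (le_trans (inf_le_right w y) (le_sup_right x y)))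

end PMV

namespace PMV

variable {M : Type} [PMV M]

/-! ### Boolean central elements -/

theorem lneg_c_mul_idem {c : M} (hca : c + c = c) :
    mul (lneg c) (lneg c) = lneg c := by
  rw [← lneg_add, hca]
theorem lneg_c_add_idem {c : M} (hc : mul c c = c) :
    lneg c + lneg c = lneg c := by
  rw [← lneg_mul, hc]
theorem rneg_c_mul_idem {c : M} (hca : c + c = c) :
    mul (rneg c) (rneg c) = rneg c := by
  rw [← rneg_add, hca]
theorem rneg_c_add_idem {c : M} (hc : mul c c = c) :
    rneg c + rneg c = rneg c := by
  rw [← rneg_mul, hc]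

theorem cmeet_left {c : M} (hc : mul c c = c) (x : M) : mul c x = inf c x := by
  apply le_antisymm
  · apply le_inf
    · exact mul_le_left c x
    · exact mul_le_right c x
  · show le (mul c (lneg c + x)) (mul c x)
    rw [R1]
    have h1 : le x (lneg c + mul c x) := R1.1 (le_refl (mul c x))
    have h2 := add_le_add_left h1 (lneg c)
    rw [← add_assoc', lneg_c_add_idem hc] at h2
    exact h2

theorem cmeet_right {c : M} (hc : mul c c = c) (x : M) : mul x c = inf x c := by
  apply le_antisymm
  · exact le_inf (mul_le_left x c) (mul_le_right x c)
  · rw [inf_eq_a7, R2]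
    have h1 : le x (mul x c + rneg c) := R2.1 (le_refl (mul x c))
    have h2 := add_le_add_right h1 (rneg c)
    rw [add_assoc', rneg_c_add_idem hc] at h2
    exact h2

theorem cmul_comm {c : M} (hc : mul c c = c) (x : M) : mul c x = mul x c := by
  rw [cmeet_left hc, cmeet_right hc, inf_comm]

theorem mul_c_rneg {c : M} (hc : mul c c = c) : mul c (rneg c) = 0 := by
  rw [cmul_comm hc, rneg_mul_self]

theorem csup_left {c : M} (hc : mul c c = c) (hca : c + c = c) (x : M) :
    c + x = sup c x := by
  apply lneg_injective
  rw [lneg_add, lneg_sup_eq]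
  exact cmeet_right (lneg_c_mul_idem hca) (lneg x)

theorem csup_right {c : M} (hc : mul c c = c) (hca : c + c = c) (x : M) :
    x + c = sup x c := by
  apply lneg_injective
  rw [lneg_add, lneg_sup_eq]
  exact cmeet_left (lneg_c_mul_idem hca) (lneg x)

theorem cadd_comm {c : M} (hc : mul c c = c) (hca : c + c = c) (x : M) :
    c + x = x + c := by
  rw [csup_left hc hca, csup_right hc hca, sup_comm]

theorem D1 {c : M} (hc : mul c c = c) (hca : c + c = c) (x y : M) :
    mul c (x + y) = mul c x + mul c y := by
  have hcl_mul : mul (lneg c) (lneg c) = lneg c := lneg_c_mul_idem hca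
  have hcl_add : lneg c + lneg c = lneg c := lneg_c_add_idem hc
  apply le_antisymm
  · rw [R1]
    have hx : le x (lneg c + mul c x) := R1.1 (le_refl _)
    have hy : le y (lneg c + mul c y) := R1.1 (le_refl _)
    have h := add_le_add hx hy
    have e : (lneg c + mul c x) + (lneg c + mul c y)
        = lneg c + (mul c x + mul c y) := by
      calc (lneg c + mul c x) + (lneg c + mul c y)
          = lneg c + (mul c x + (lneg c + mul c y)) := add_assoc' _ _ _
        _ = lneg c + ((mul c x + lneg c) + mul c y) := by
              rw [← add_assoc' (mul c x) (lneg c) (mul c y)]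
        _ = lneg c + ((lneg c + mul c x) + mul c y) := by
              rw [← cadd_comm hcl_mul hcl_add (mul c x)]
        _ = lneg c + (lneg c + (mul c x + mul c y)) := by
              rw [add_assoc' (lneg c) (mul c x) (mul c y)]
        _ = (lneg c + lneg c) + (mul c x + mul c y) := (add_assoc' _ _ _).symm
        _ = lneg c + (mul c x + mul c y) := by rw [hcl_add]
    rw [e] at h
    exact h
  · rw [cmeet_left hc (x + y)]
    apply le_inf
    · have h := add_le_add (mul_le_left c x) (mul_le_left c y)
      rwa [hca] at h
    · exact add_le_add (mul_le_right c x) (mul_le_right c y)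

theorem D2 {c : M} (hc : mul c c = c) (hca : c + c = c) (x y : M) :
    mul (x + y) c = mul x c + mul y c := by
  have hcr_mul : mul (rneg c) (rneg c) = rneg c := rneg_c_mul_idem hca
  have hcr_add : rneg c + rneg c = rneg c := rneg_c_add_idem hc
  apply le_antisymm
  · rw [R2]
    have hx : le x (mul x c + rneg c) := R2.1 (le_refl _)
    have hy : le y (mul y c + rneg c) := R2.1 (le_refl _)
    have h := add_le_add hx hy
    have e : (mul x c + rneg c) + (mul y c + rneg c)
        = (mul x c + mul y c) + rneg c := by
      calc (mul x c + rneg c) + (mul y c + rneg c)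
          = mul x c + (rneg c + (mul y c + rneg c)) := add_assoc' _ _ _
        _ = mul x c + ((rneg c + mul y c) + rneg c) := by
              rw [← add_assoc' (rneg c) (mul y c) (rneg c)]
        _ = mul x c + ((mul y c + rneg c) + rneg c) := by
              rw [cadd_comm hcr_mul hcr_add (mul y c)]
        _ = mul x c + (mul y c + (rneg c + rneg c)) := by
              rw [add_assoc' (mul y c) (rneg c) (rneg c)]
        _ = mul x c + (mul y c + rneg c) := by rw [hcr_add]
        _ = (mul x c + mul y c) + rneg c := (add_assoc' _ _ _).symm
    rw [e] at h
    exact h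
  · rw [cmeet_right hc (x + y)]
    apply le_inf
    · exact add_le_add (mul_le_left x c) (mul_le_left y c)
    · have h := add_le_add (mul_le_right x c) (mul_le_right y c)
      rwa [hca] at h

/-! ### projection lemmas -/

theorem pi_lneg_pi {c : M} (hc : mul c c = c) (hca : c + c = c) (z : M) :
    mul c (lneg (mul c z)) = mul c (lneg z) := by
  rw [lneg_mul, D1 hc hca, mul_lneg_self, add_zero']

theorem pi_rneg_pi {c : M} (hc : mul c c = c) (hca : c + c = c) (z : M) :
    mul c (rneg (mul c z)) = mul c (rneg z) := by
  rw [rneg_mul, D1 hc hca, mul_c_rneg hc, add_zero']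

theorem pi_of_le {c : M} (hc : mul c c = c) {z : M} (h : le z c) : mul c z = z := by
  rw [cmeet_left hc, inf_of_le_right h]

end PMV

namespace PMV

variable {M : Type} [PMV M]

/-- The interval `[0, c]`. -/
def Ic (c : M) : Type := {x : M // le x c}

/-- The pseudo MV-algebra structure on `[0, c]` for a Boolean central element `c`. -/
def intervalPMV (c : M) (hc : mul c c = c) (hca : c + c = c) : PMV (Ic c) where
  add p q := ⟨p.1 + q.1, by have h := add_le_add p.2 q.2; rwa [hca] at h⟩
  zero := ⟨0, zero_le c⟩
  one := ⟨c, le_refl c⟩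
  lneg p := ⟨mul c (lneg p.1), mul_le_left _ _⟩
  rneg p := ⟨mul c (rneg p.1), mul_le_left _ _⟩
  add_assoc' p q s := Subtype.ext (add_assoc' _ _ _)
  add_zero' p := Subtype.ext (add_zero' _)
  zero_add' p := Subtype.ext (zero_add' _)
  add_one' p := Subtype.ext (by
    show p.1 + c = c
    rw [csup_right hc hca, sup_eq_right p.2])
  one_add' p := Subtype.ext (by
    show c + p.1 = c
    rw [csup_left hc hca, sup_of_le p.2])
  lneg_one := Subtype.ext (by
    show mul c (lneg c) = 0
    exact mul_lneg_self c)
  rneg_one := Subtype.ext (by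
    show mul c (rneg c) = 0
    exact mul_c_rneg hc)
  a5 p q := Subtype.ext (by
    show mul c (rneg (mul c (lneg p.1) + mul c (lneg q.1)))
        = mul c (lneg (mul c (rneg p.1) + mul c (rneg q.1)))
    rw [← D1 hc hca (lneg p.1) (lneg q.1), pi_rneg_pi hc hca,
        ← D1 hc hca (rneg p.1) (rneg q.1), pi_lneg_pi hc hca,
        PMV.a5 p.1 q.1])
  a6a p q := Subtype.ext (by
    have key : ∀ u v : M, le u c →
        u + mul c (rneg (mul c (lneg v) + mul c (lneg (mul c (rneg u)))))
        = mul c (u + rneg (lneg v + lneg (rneg u))) := by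
      intro u v hu
      rw [pi_lneg_pi hc hca (rneg u), ← D1 hc hca (lneg v) (lneg (rneg u)),
          pi_rneg_pi hc hca, D1 hc hca u (rneg (lneg v + lneg (rneg u))),
          pi_of_le hc hu]
    show p.1 + mul c (rneg (mul c (lneg q.1) + mul c (lneg (mul c (rneg p.1)))))
        = q.1 + mul c (rneg (mul c (lneg p.1) + mul c (lneg (mul c (rneg q.1)))))
    rw [key p.1 q.1 p.2, key q.1 p.1 q.2, PMV.a6a p.1 q.1])
  a6b p q := Subtype.ext (by
    have key : ∀ u v : M, le u c →
        u + mul c (rneg (mul c (lneg v) + mul c (lneg (mul c (rneg u)))))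
        = mul c (u + rneg (lneg v + lneg (rneg u))) := by
      intro u v hu
      rw [pi_lneg_pi hc hca (rneg u), ← D1 hc hca (lneg v) (lneg (rneg u)),
          pi_rneg_pi hc hca, D1 hc hca u (rneg (lneg v + lneg (rneg u))),
          pi_of_le hc hu]
    have keyb : ∀ u v : M, le v c →
        mul c (rneg (mul c (lneg (mul c (lneg v))) + mul c (lneg u))) + v
        = mul c (rneg (lneg (lneg v) + lneg u) + v) := by
      intro u v hv
      rw [pi_lneg_pi hc hca (lneg v), ← D1 hc hca (lneg (lneg v)) (lneg u),
          pi_rneg_pi hc hca, D1 hc hca (rneg (lneg (lneg v) + lneg u)) v,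
          pi_of_le hc hv]
    show p.1 + mul c (rneg (mul c (lneg q.1) + mul c (lneg (mul c (rneg p.1)))))
        = mul c (rneg (mul c (lneg (mul c (lneg q.1))) + mul c (lneg p.1))) + q.1
    rw [key p.1 q.1 p.2, keyb p.1 q.1 q.2, PMV.a6b p.1 q.1])
  a6c p q := Subtype.ext (by
    have key : ∀ u v : M, le u c →
        u + mul c (rneg (mul c (lneg v) + mul c (lneg (mul c (rneg u)))))
        = mul c (u + rneg (lneg v + lneg (rneg u))) := by
      intro u v hu
      rw [pi_lneg_pi hc hca (rneg u), ← D1 hc hca (lneg v) (lneg (rneg u)),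
          pi_rneg_pi hc hca, D1 hc hca u (rneg (lneg v + lneg (rneg u))),
          pi_of_le hc hu]
    have keyb : ∀ u v : M, le v c →
        mul c (rneg (mul c (lneg (mul c (lneg v))) + mul c (lneg u))) + v
        = mul c (rneg (lneg (lneg v) + lneg u) + v) := by
      intro u v hv
      rw [pi_lneg_pi hc hca (lneg v), ← D1 hc hca (lneg (lneg v)) (lneg u),
          pi_rneg_pi hc hca, D1 hc hca (rneg (lneg (lneg v) + lneg u)) v,
          pi_of_le hc hv]
    show p.1 + mul c (rneg (mul c (lneg q.1) + mul c (lneg (mul c (rneg p.1)))))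
        = mul c (rneg (mul c (lneg (mul c (lneg p.1))) + mul c (lneg q.1))) + p.1
    rw [key p.1 q.1 p.2, keyb q.1 p.1 p.2, PMV.a6c p.1 q.1])
  a7 p q := Subtype.ext (by
    have keyL : ∀ u v : M, le v c →
        mul c (rneg (mul c (lneg (mul c (lneg u) + v)) + mul c (lneg u)))
        = mul c (rneg (lneg (lneg u + v) + lneg u)) := by
      intro u v hv
      have e1 : mul c (lneg u) + v = mul c (lneg u + v) := by
        rw [D1 hc hca (lneg u) v, pi_of_le hc hv]
      rw [e1, pi_lneg_pi hc hca (lneg u + v),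
          ← D1 hc hca (lneg (lneg u + v)) (lneg u), pi_rneg_pi hc hca]
    have keyR : ∀ u v : M, le u c →
        mul c (rneg (mul c (lneg v) + mul c (lneg (u + mul c (rneg v)))))
        = mul c (rneg (lneg v + lneg (u + rneg v))) := by
      intro u v hu
      have e1 : u + mul c (rneg v) = mul c (u + rneg v) := by
        rw [D1 hc hca u (rneg v), pi_of_le hc hu]
      rw [e1, pi_lneg_pi hc hca (u + rneg v),
          ← D1 hc hca (lneg v) (lneg (u + rneg v)), pi_rneg_pi hc hca]
    show mul c (rneg (mul c (lneg (mul c (lneg p.1) + q.1)) + mul c (lneg p.1)))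
        = mul c (rneg (mul c (lneg q.1) + mul c (lneg (p.1 + mul c (rneg q.1)))))
    rw [keyL p.1 q.1 q.2, keyR p.1 q.1 p.2, PMV.a7 p.1 q.1])
  a8a p := Subtype.ext (by
    show mul c (rneg (mul c (lneg p.1))) = p.1
    rw [pi_rneg_pi hc hca (lneg p.1), rl, pi_of_le hc p.2])
  a8b p := Subtype.ext (by
    show mul c (lneg (mul c (rneg p.1))) = p.1
    rw [pi_lneg_pi hc hca (rneg p.1), lr, pi_of_le hc p.2])

end PMV

namespace PMV

variable {M : Type} [PMV M]

/-! ### Square root theory -/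

/-- `b = r(0)⁻ ⊙ r(0)⁻`. -/
def bB (r : M → M) : M := mul (lneg (r 0)) (lneg (r 0))
/-- `e = r(0) ⊕ r(0)`. -/
def eE (r : M → M) : M := r 0 + r 0
/-- `d = r(0) ∧ b`. -/
def dD (r : M → M) : M := inf (r 0) (bB r)

variable {r : M → M}

theorem le_r_self (hr : IsSquareRoot r) (x : M) : le x (r x) :=
  hr.2 x x (mul_le_left x x)

theorem r_mono (hr : IsSquareRoot r) {x y : M} (h : le x y) : le (r x) (r y) :=
  hr.2 y (r x) (by rw [hr.1 x]; exact h)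

theorem le_a_iff (hr : IsSquareRoot r) {x : M} : le x (r 0) ↔ mul x x = 0 := by
  constructor
  · intro h
    have h2 := mul_le_mul h h
    rw [hr.1 0] at h2
    exact le_zero h2
  · intro h
    exact hr.2 0 x (by rw [h]; exact le_refl 0)

theorem lneg_a_add (hr : IsSquareRoot r) : lneg (r 0) + lneg (r 0) = 1 := by
  have h := congrArg lneg (hr.1 0)
  rwa [lneg_mul, lneg_zero] at h

theorem a_le_lneg_a (hr : IsSquareRoot r) : le (r 0) (lneg (r 0)) := lneg_a_add hr

/-! #### the double-negation automorphism and `r` -/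

theorem dd_mul (u v : M) :
    lneg (lneg (mul u v)) = mul (lneg (lneg u)) (lneg (lneg v)) := by
  rw [lneg_mul, lneg_add]
theorem rr_mul (u v : M) :
    rneg (rneg (mul u v)) = mul (rneg (rneg u)) (rneg (rneg v)) := by
  rw [rneg_mul, rneg_add]
theorem dd_mono {x y : M} (h : le x y) : le (lneg (lneg x)) (lneg (lneg y)) :=
  lneg_le_lneg (lneg_le_lneg h)
theorem ddrr (x : M) : rneg (rneg (lneg (lneg x))) = x := by rw [rl, rl]
theorem rrdd (x : M) : lneg (lneg (rneg (rneg x))) = x := by rw [lr, lr]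

theorem r_dd (hr : IsSquareRoot r) (x : M) :
    r (lneg (lneg x)) = lneg (lneg (r x)) := by
  have step1 : ∀ z : M, le (lneg (lneg (r z))) (r (lneg (lneg z))) := by
    intro z
    apply hr.2
    rw [← dd_mul, hr.1 z]
    exact le_refl _
  have step2 : ∀ z : M, le (rneg (rneg (r z))) (r (rneg (rneg z))) := by
    intro z
    apply hr.2
    rw [← rr_mul, hr.1 z]
    exact le_refl _
  apply le_antisymm
  · have h1 := step2 (lneg (lneg x))
    rw [ddrr x] at h1
    have h2 := dd_mono h1
    rw [rrdd] at h2
    exact h2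
  · exact step1 x

theorem a_dd (hr : IsSquareRoot r) : lneg (lneg (r 0)) = r 0 := by
  have h := r_dd hr 0
  rw [lneg_zero, lneg_one] at h
  exact h.symm

theorem a_sym (hr : IsSquareRoot r) : rneg (r 0) = lneg (r 0) := by
  conv_lhs => rw [← a_dd hr]
  rw [rl]

/-! #### basic identities for `a, b, e` -/

theorem lneg_e : lneg (eE r) = bB r := lneg_add (r 0) (r 0)

theorem rneg_e (hr : IsSquareRoot r) : rneg (eE r) = bB r := by
  show rneg (r 0 + r 0) = _
  rw [rneg_add, a_sym hr]
  rfl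

theorem lneg_b (hr : IsSquareRoot r) : lneg (bB r) = eE r := by
  show lneg (mul (lneg (r 0)) (lneg (r 0))) = r 0 + r 0
  rw [lneg_mul, a_dd hr]

theorem rneg_b (hr : IsSquareRoot r) : rneg (bB r) = eE r := by
  show rneg (mul (lneg (r 0)) (lneg (r 0))) = r 0 + r 0
  rw [rneg_mul, rl]

theorem lneg_a_mul_a (hr : IsSquareRoot r) : mul (lneg (r 0)) (r 0) = 0 := by
  rw [← a_sym hr, rneg_mul_self]

theorem a_mul_b (hr : IsSquareRoot r) : mul (r 0) (bB r) = 0 := by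
  show mul (r 0) (mul (lneg (r 0)) (lneg (r 0))) = 0
  rw [← mul_assoc, mul_lneg_self, zero_mul]

theorem b_le_lneg_a : le (bB r) (lneg (r 0)) := mul_le_left _ _

theorem e_mul_lneg_a (hr : IsSquareRoot r) : mul (eE r) (lneg (r 0)) = r 0 := by
  have h := inf_eq_a7 (r 0) (lneg (r 0))
  rw [rl, inf_of_le_left (a_le_lneg_a hr)] at h
  exact h.symm

theorem lneg_a_mul_e (hr : IsSquareRoot r) : mul (lneg (r 0)) (eE r) = r 0 := by
  have h : inf (lneg (r 0)) (r 0) = mul (lneg (r 0)) (eE r) := by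
    show mul (lneg (r 0)) (lneg (lneg (r 0)) + r 0) = _
    rw [a_dd hr]
    rfl
  rw [inf_comm, inf_of_le_left (a_le_lneg_a hr)] at h
  exact h.symm

theorem lneg_a_eq_b_add (hr : IsSquareRoot r) : lneg (r 0) = bB r + r 0 := by
  have h := sup_eq_right (b_le_lneg_a (r := r))
  have h2 : sup (bB r) (lneg (r 0)) = bB r + mul (rneg (bB r)) (lneg (r 0)) := rfl
  rw [h2, rneg_b hr, e_mul_lneg_a hr] at h
  exact h.symm

theorem lneg_a_eq_add_b (hr : IsSquareRoot r) : lneg (r 0) = r 0 + bB r := by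
  have h := sup_eq_right (b_le_lneg_a (r := r))
  rw [sup_eq_c, lneg_b hr, lneg_a_mul_e hr] at h
  exact h.symm

end PMV

namespace PMV

variable {M : Type} [PMV M] {r : M → M}

/-! ### the universal bound `r x ≤ a ⊕ x` -/

theorem nu_le_a (hr : IsSquareRoot r) (x : M) : le (mul (r x) (lneg x)) (r 0) := by
  have hT1 : lneg (r x) + lneg (r x) = lneg x := by
    have h := congrArg lneg (hr.1 x); rwa [lneg_mul] at h
  have h1 : le (lneg x) (lneg (r x) + (lneg (lneg x) + lneg (r x))) := by
    rw [← hT1]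
    exact add_le_add_left (le_add_left _ _) _
  have h2 : le (mul (r x) (lneg x)) (lneg (lneg x) + lneg (r x)) := R1.2 h1
  have h3 : le (mul (r x) (lneg x)) (lneg (mul (r x) (lneg x))) := by
    rw [lneg_mul]; exact h2
  apply (le_a_iff hr).2
  apply le_zero
  have h4 := mul_le_mul (le_refl (mul (r x) (lneg x))) h3
  rwa [mul_lneg_self] at h4

theorem r_eq_nu_add (hr : IsSquareRoot r) (x : M) :
    r x = mul (r x) (lneg x) + x := by
  have h := sup_eq_b (r x) x
  rw [sup_of_le (le_r_self hr x)] at h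
  exact h

theorem r_le_a_add (hr : IsSquareRoot r) (x : M) : le (r x) (r 0 + x) := by
  rw [r_eq_nu_add hr x]
  exact add_le_add_right (nu_le_a hr x) x

/-! ### the swap inequality -/

theorem hearts (hr : IsSquareRoot r) {x : M} (hx : le x (bB r)) :
    le (x + r 0) (r 0 + x) := by
  have h1 : le (eE r) (rneg x) := by
    have h := rneg_le_rneg hx; rwa [rneg_b hr] at h
  have h2 : le (r 0) (mul (lneg (r 0)) (rneg x)) := by
    have h := mul_le_mul (le_refl (lneg (r 0))) h1
    rwa [lneg_a_mul_e hr] at h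
  have h4 : le (mul (x + r 0) (x + r 0)) x := by
    rw [R2, rneg_add, a_sym hr]
    exact add_le_add_left h2 x
  have h5 : le (x + r 0) (r x) := hr.2 x (x + r 0) h4
  exact le_trans h5 (r_le_a_add hr x)

/-! ### the element `d = a ∧ b` -/

theorem d_le_a : le (dD r) (r 0) := inf_le_left _ _
theorem d_le_b : le (dD r) (bB r) := inf_le_right _ _

theorem d_mul_b (hr : IsSquareRoot r) : mul (dD r) (bB r) = 0 := by
  apply le_zero
  have h := mul_le_mul (d_le_a (r := r)) (le_refl (bB r))
  rw [a_mul_b hr] at h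
  exact h

theorem b_le_lneg_d (hr : IsSquareRoot r) : le (bB r) (lneg (dD r)) :=
  le_lneg_of_mul_eq_zero (d_mul_b hr)

theorem d_dd (hr : IsSquareRoot r) : lneg (lneg (dD r)) = dD r := by
  show lneg (lneg (inf (r 0) (bB r))) = inf (r 0) (bB r)
  rw [lneg_inf_eq, lneg_sup_eq, a_dd hr, lneg_b hr, lneg_e]

theorem e_le_lneg_d (hr : IsSquareRoot r) : le (eE r) (lneg (dD r)) := by
  have h := lneg_le_lneg (d_le_b (r := r))
  rwa [lneg_b hr] at h

theorem e_sq_le (hr : IsSquareRoot r) : le (mul (eE r) (eE r)) (eE r) := by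
  have h1 : le (mul (r 0) (eE r)) (r 0) := by
    have h := V2 (r 0) (r 0) (r 0)
    rw [hr.1 0, zero_add'] at h
    exact h
  have h2 := V1 (r 0) (r 0) (eE r)
  exact le_trans h2 (add_le_add_left h1 (r 0))

theorem e_le_S (hr : IsSquareRoot r) : le (eE r) (r (lneg (dD r))) :=
  le_trans (hr.2 (eE r) (eE r) (e_sq_le hr)) (r_mono hr (e_le_lneg_d hr))

theorem lneg_a_le_S (hr : IsSquareRoot r) : le (lneg (r 0)) (r (lneg (dD r))) := by
  apply hr.2
  show le (mul (lneg (r 0)) (lneg (r 0))) (lneg (dD r))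
  exact b_le_lneg_d hr

theorem S_dd (hr : IsSquareRoot r) :
    lneg (lneg (r (lneg (dD r)))) = r (lneg (dD r)) := by
  have h := r_dd hr (lneg (dD r))
  have e3 : lneg (lneg (lneg (dD r))) = lneg (dD r) := congrArg lneg (d_dd hr)
  rw [e3] at h
  exact h.symm

theorem h_add_h (hr : IsSquareRoot r) :
    lneg (r (lneg (dD r))) + lneg (r (lneg (dD r))) = dD r := by
  have h := congrArg lneg (hr.1 (lneg (dD r)))
  rwa [lneg_mul, d_dd hr] at h

theorem h_le_b (hr : IsSquareRoot r) : le (lneg (r (lneg (dD r)))) (bB r) := by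
  have h := lneg_le_lneg (e_le_S hr)
  rwa [lneg_e] at h

/-! ### THE key lemma : `d = 0` -/

theorem d_eq_zero (hr : IsSquareRoot r) : dD r = 0 := by
  set a := r 0 with ha
  set S := r (lneg (dD r)) with hS
  set H := lneg S with hH
  have hHH : H + H = dD r := h_add_h hr
  have hHb : le H (bB r) := h_le_b hr
  have hya' : le (a + H) (lneg a) := by
    rw [lneg_a_eq_add_b hr]
    exact add_le_add_left hHb a
  have hyS : le (a + H) S := le_trans hya' (lneg_a_le_S hr)
  have hdiv : mul S (lneg S + (a + H)) = a + H := inf_of_le_right hyS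
  have hswap : le (H + a) (a + H) := hearts hr hHb
  have hkey : le (lneg S + (a + H)) (lneg a) := by
    have h1 := add_le_add_right hswap H
    rw [add_assoc'] at h1
    have h2 : (a + H) + H = a + dD r := by rw [add_assoc', hHH]
    rw [h2] at h1
    have h3 : le (a + dD r) (lneg a) := by
      rw [lneg_a_eq_add_b hr]
      exact add_le_add_left (d_le_b (r := r)) a
    exact le_trans h1 h3
  have hy_le : le (a + H) (mul S (lneg a)) := by
    have h := mul_le_mul (le_refl S) hkey
    rwa [hdiv] at h
  have hy2 : mul (a + H) (a + H) = 0 := by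
    apply le_zero
    rw [R1, add_zero', lneg_add]
    have hlH : lneg H = S := S_dd hr
    rw [hlH]
    exact hy_le
  have hy_a : le (a + H) a := (le_a_iff hr).2 hy2
  have hH0 : H = 0 := by
    have h1 : le H (lneg a) := le_trans hHb (b_le_lneg_a (r := r))
    have h3 : mul (lneg a) (lneg (lneg a) + H) = H := inf_of_le_right h1
    rw [a_dd hr] at h3
    have h4 := mul_le_mul (le_refl (lneg a)) hy_a
    rw [h3, lneg_a_mul_a hr] at h4
    exact le_zero h4
  rw [← hHH, hH0, add_zero']

end PMV

namespace PMV

variable {M : Type} [PMV M] {r : M → M}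

/-! ### Booleanness of `b` and `e` -/

theorem idem_of_le_b (hr : IsSquareRoot r) {x : M} (hx : le x (bB r)) :
    x + x = x := by
  have hz_x : le (mul (x + x) (lneg x)) x := by
    rw [R2, rl]
    exact le_refl _
  have hz_lx : le (mul (x + x) (lneg x)) (lneg x) := mul_le_right _ _
  have hz_a : le (mul (x + x) (lneg x)) (r 0) := by
    apply (le_a_iff hr).2
    apply le_zero
    have h := mul_le_mul hz_x hz_lx
    rwa [mul_lneg_self] at h
  have hz_b : le (mul (x + x) (lneg x)) (bB r) := le_trans hz_x hx
  have hz0 : mul (x + x) (lneg x) = 0 := by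
    have h : le (mul (x + x) (lneg x)) (dD r) := le_inf hz_a hz_b
    rw [d_eq_zero hr] at h
    exact le_zero h
  have hs := sup_eq_b (x + x) x
  rw [hz0, zero_add', sup_of_le (le_add_right x x)] at hs
  exact hs

theorem b_add_b (hr : IsSquareRoot r) : bB r + bB r = bB r :=
  idem_of_le_b hr (le_refl (bB r))

theorem e_mul_e (hr : IsSquareRoot r) : mul (eE r) (eE r) = eE r := by
  have h := congrArg lneg (b_add_b hr)
  rwa [lneg_add, lneg_b hr] at h

theorem e_mul_b (hr : IsSquareRoot r) : mul (eE r) (bB r) = 0 := by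
  rw [← lneg_e, mul_lneg_self]

theorem e_add_e (hr : IsSquareRoot r) : eE r + eE r = eE r := by
  have hc1e : le (mul (eE r + eE r) (bB r)) (eE r) := by
    rw [R2, rneg_b hr]
    exact le_refl _
  have hc1b : le (mul (eE r + eE r) (bB r)) (bB r) := mul_le_right _ _
  have hc1a : le (mul (eE r + eE r) (bB r)) (r 0) := by
    apply (le_a_iff hr).2
    apply le_zero
    have h := mul_le_mul hc1e hc1b
    rwa [e_mul_b hr] at h
  have hc10 : mul (eE r + eE r) (bB r) = 0 := by
    have h : le (mul (eE r + eE r) (bB r)) (dD r) := le_inf hc1a hc1b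
    rw [d_eq_zero hr] at h
    exact le_zero h
  have hs := sup_eq_b (eE r + eE r) (eE r)
  rw [lneg_e, hc10, zero_add', sup_of_le (le_add_right (eE r) (eE r))] at hs
  exact hs

theorem b_mul_b (hr : IsSquareRoot r) : mul (bB r) (bB r) = bB r := by
  have h := congrArg lneg (e_add_e hr)
  rwa [lneg_add, lneg_e] at h

/-! ### the decomposition -/

theorem sup_b_e (hr : IsSquareRoot r) : sup (bB r) (eE r) = 1 := by
  have h1 : eE r + bB r = 1 := by
    rw [← lneg_b hr]
    exact lneg_add_self (bB r)
  rw [sup_comm, ← csup_left (e_mul_e hr) (e_add_e hr) (bB r), h1]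

theorem decomp (hr : IsSquareRoot r) (w : M) :
    sup (mul (bB r) w) (mul (eE r) w) = w := by
  rw [cmeet_left (b_mul_b hr) w, cmeet_left (e_mul_e hr) w,
      inf_comm (bB r) w, inf_comm (eE r) w, ← inf_sup_distrib, sup_b_e hr]
  exact inf_of_le_left (le_one w)

end PMV

namespace PMV

variable {M : Type} [PMV M] {r : M → M}

theorem bsi_forward (hr : IsSquareRoot r) (hB : BooleanSubdirectlyIrreducible M) :
    r 0 = lneg (r 0) := by
  have hbm := b_mul_b hr
  have hba := b_add_b hr
  have hem := e_mul_e hr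
  have hea := e_add_e hr
  letI i1 : PMV (Ic (bB r)) := intervalPMV (bB r) hbm hba
  letI i2 : PMV (Ic (eE r)) := intervalPMV (eE r) hem hea
  have hbool : ∀ ξ : Ic (bB r), ξ + ξ = ξ := by
    intro ξ
    apply Subtype.ext
    show ξ.1 + ξ.1 = ξ.1
    exact idem_of_le_b hr ξ.2
  let f : M → Ic (bB r) × Ic (eE r) := fun x =>
    (⟨mul (bB r) x, mul_le_left _ _⟩, ⟨mul (eE r) x, mul_le_left _ _⟩)
  have hhom : IsPMVHom f := by
    refine ⟨?_, ?_, ?_, ?_, ?_⟩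
    · exact Prod.ext (Subtype.ext (mul_zero _)) (Subtype.ext (mul_zero _))
    · exact Prod.ext (Subtype.ext (mul_one _)) (Subtype.ext (mul_one _))
    · intro x y
      exact Prod.ext (Subtype.ext (D1 hbm hba x y)) (Subtype.ext (D1 hem hea x y))
    · intro x
      exact Prod.ext (Subtype.ext (pi_lneg_pi hbm hba x).symm)
        (Subtype.ext (pi_lneg_pi hem hea x).symm)
    · intro x
      exact Prod.ext (Subtype.ext (pi_rneg_pi hbm hba x).symm)
        (Subtype.ext (pi_rneg_pi hem hea x).symm)
  have hinj : Function.Injective f := by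
    intro u v huv
    have h1 : mul (bB r) u = mul (bB r) v := congrArg (fun p => p.1.1) huv
    have h2 : mul (eE r) u = mul (eE r) v := congrArg (fun p => p.2.1) huv
    rw [← decomp hr u, ← decomp hr v, h1, h2]
  have h2 := hB (Ic (bB r)) (Ic (eE r)) hbool f hhom hinj
  have hb0 : bB r = 0 := by
    have hfe : (f (bB r)).2 = (f 0).2 := by
      apply Subtype.ext
      show mul (eE r) (bB r) = mul (eE r) 0
      rw [e_mul_b hr, mul_zero]
    exact h2 hfe
  rw [lneg_a_eq_add_b hr, hb0, add_zero']

theorem bsi_backward (hr : IsSquareRoot r) (hstrict : r 0 = lneg (r 0)) :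
    BooleanSubdirectlyIrreducible M := by
  intro N₁ N₂ _ _ hBool f hf hinj
  obtain ⟨hf0, hf1, hfadd, hflneg, hfrneg⟩ := hf
  intro m m' hm
  have hmulf : ∀ u v : M, (f (mul u v)).1 = mul (f u).1 (f v).1 := by
    intro u v
    show (f (rneg (lneg v + lneg u))).1 = _
    rw [hfrneg, hfadd, hflneg, hflneg]
    rfl
  have h1 : mul ((f (r 0)).1) ((f (r 0)).1) = (0 : N₁) := by
    rw [← hmulf, hr.1 0, hf0]
    rfl
  have h2 : mul ((f (r 0)).1) ((f (r 0)).1) = (f (r 0)).1 := by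
    show rneg (lneg ((f (r 0)).1) + lneg ((f (r 0)).1)) = _
    rw [hBool, rl]
  have hz : (f (r 0)).1 = 0 := by rw [← h2, h1]
  have hz1 : (f (r 0)).1 = lneg ((f (r 0)).1) := by
    conv_lhs => rw [hstrict]
    exact congrArg Prod.fst (hflneg (r 0))
  have h01 : (0 : N₁) = 1 := by
    have h := hz1
    rw [hz] at h
    rw [lneg_zero] at h
    exact h
  have hN1 : ∀ n : N₁, n = 1 := by
    intro n
    calc n = n + 0 := (add_zero' n).symm
      _ = n + 1 := by rw [h01]
      _ = 1 := add_one' n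
  apply hinj
  apply Prod.ext
  · rw [hN1 (f m).1, hN1 (f m').1]
  · exact hm

end PMV

/-- A pseudo MV-algebra `M` with a square root `r` is Boolean subdirectly irreducible
iff `r` is strict, i.e. `r(0) = r(0)⁻`. -/
theorem boolean_subdirectly_irreducible_iff_strict {M : Type} [PMV M] (r : M → M)
    (hr : PMV.IsSquareRoot r) :
    BooleanSubdirectlyIrreducible M ↔ r 0 = PMV.lneg (r 0) :=
  ⟨PMV.bsi_forward hr, PMV.bsi_backward hr⟩
end

section
/- Let M = Γ(G,u) be a symmetric representable pseudo MV-algebra with u/2 ∈ G. Then for every z ∈ M, the square root of z ⊙ z exists and equals z ∨ √0; in particular z ⊙ z always has a square root in M. -/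
/-- `a` is the square root of `x` in the pseudo MV-algebra `Γ(G,u) = [0,u]`,
where `y ⊙ z = (y - u + z) ⊔ 0`. -/
def IsPMVSqrt {G : Type} [Lattice G] [AddGroup G] (u x a : G) : Prop :=
  (0 ≤ a ∧ a ≤ u) ∧ ((a - u + a) ⊔ 0 = x) ∧
    ∀ y : G, 0 ≤ y → y ≤ u → ((y - u + y) ⊔ 0) ≤ x → y ≤ a

private lemma double_le_double {H : Type} [LinearOrder H] [AddGroup H]
    [CovariantClass H H (· + ·) (· ≤ ·)]
    [CovariantClass H H (Function.swap (· + ·)) (· ≤ ·)]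
    {a b : H} (h : a + a ≤ b + b) : a ≤ b := by
  rcases le_total a b with h' | h'
  · exact h'
  · have h1 : b + b ≤ b + a := add_le_add_right h' b
    have h2 : b + a ≤ a + a := add_le_add_left h' a
    have h3 : a + a = b + a := le_antisymm (h.trans h1) h2
    exact le_of_eq (add_right_cancel h3)

private lemma comp_eq_lin {H : Type} [LinearOrder H] [AddGroup H]
    [CovariantClass H H (· + ·) (· ≤ ·)]
    [CovariantClass H H (Function.swap (· + ·)) (· ≤ ·)]
    (v z : H) :
    ((z ⊔ v) + (z ⊔ v) - (v + v)) ⊔ 0 = (z + z - (v + v)) ⊔ 0 := by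
  rcases le_total z v with h | h
  · rw [sup_eq_right.mpr h, sub_self]
    have h2 : z + z - (v + v) ≤ 0 := by
      rw [sub_nonpos]
      calc z + z ≤ z + v := add_le_add_right h z
        _ ≤ v + v := add_le_add_left h v
    rw [sup_eq_right.mpr h2, sup_idem]
  · rw [sup_eq_left.mpr h]

private lemma comp_le_lin {H : Type} [LinearOrder H] [AddGroup H]
    [CovariantClass H H (· + ·) (· ≤ ·)]
    [CovariantClass H H (Function.swap (· + ·)) (· ≤ ·)]
    {v z y : H}
    (h : (y + y - (v + v)) ⊔ 0 ≤ (z + z - (v + v)) ⊔ 0) : y ≤ z ⊔ v := by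
  rcases le_total (z + z - (v + v)) 0 with h1 | h1
  · rw [sup_eq_right.mpr h1] at h
    have h2 : y + y - (v + v) ≤ 0 := le_sup_left.trans h
    have h3 : y + y ≤ v + v := sub_nonpos.mp h2
    exact (double_le_double h3).trans le_sup_right
  · rw [sup_eq_left.mpr h1] at h
    have h2 : y + y - (v + v) ≤ z + z - (v + v) := le_sup_left.trans h
    have h3 : y + y ≤ z + z := by
      have := add_le_add_right h2 (v + v)
      simpa using this
    exact (double_le_double h3).trans le_sup_left

/-- Let `M = Γ(G,u)` be a symmetric representable pseudo MV-algebra with `u/2 = v ∈ G`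
(so `√0 = v`).  Then for every `z ∈ M`, the square root of `z ⊙ z = (z - u + z) ⊔ 0`
exists and equals `z ⊔ √0`. -/
theorem sqrt_of_square_exists {G : Type} [Lattice G] [AddGroup G]
    [CovariantClass G G (· + ·) (· ≤ ·)]
    [CovariantClass G G (Function.swap (· + ·)) (· ≤ ·)]
    (ι : Type) (L : ι → Type) [∀ i, AddGroup (L i)] [∀ i, LinearOrder (L i)]
    [∀ i, CovariantClass (L i) (L i) (· + ·) (· ≤ ·)]
    [∀ i, CovariantClass (L i) (L i) (Function.swap (· + ·)) (· ≤ ·)]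
    (f : G → ∀ i, L i)
    (hadd : ∀ x y : G, f (x + y) = f x + f y)
    (hsup : ∀ x y : G, f (x ⊔ y) = f x ⊔ f y)
    (hinj : Function.Injective f)
    (hsur : ∀ i, Function.Surjective fun g => f g i)
    (u : G) (hu0 : 0 ≤ u) (hsu : ∀ g : G, ∃ n : ℕ, 1 ≤ n ∧ g ≤ n • u)
    (hsym : ∀ g : G, u + g = g + u)
    (v : G) (hv : v + v = u) :
    ∀ z : G, 0 ≤ z → z ≤ u → IsPMVSqrt u ((z - u + z) ⊔ 0) (z ⊔ v) := by
  -- basic morphism facts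
  have hf0 : f 0 = 0 := by
    have h := hadd 0 0
    rw [add_zero] at h
    exact (left_eq_add.mp h)
  have hfneg : ∀ x : G, f (-x) = -(f x) := by
    intro x
    have h := hadd x (-x)
    rw [add_neg_cancel, hf0] at h
    exact (eq_neg_of_add_eq_zero_right h.symm)
  have hfsub : ∀ x y : G, f (x - y) = f x - f y := by
    intro x y
    rw [sub_eq_add_neg, hadd, hfneg, sub_eq_add_neg]
  have hle : ∀ x y : G, x ≤ y ↔ f x ≤ f y := by
    intro x y
    constructor
    · intro h
      have h1 : f (x ⊔ y) = f y := by rw [sup_eq_right.mpr h]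
      rw [hsup] at h1
      exact sup_eq_right.mp h1
    · intro h
      have h1 : f (x ⊔ y) = f y := by rw [hsup]; exact sup_eq_right.mpr h
      exact sup_eq_right.mp (hinj h1)
  -- `u` is central, so `-u + g = g - u`
  have hc : ∀ g : G, -u + g = g - u := by
    intro g
    rw [eq_sub_iff_add_eq, add_assoc, ← hsym g, neg_add_cancel_left]
  have hsq : ∀ g : G, g - u + g = g + g - u := by
    intro g
    rw [sub_eq_add_neg, add_assoc, hc g, sub_eq_add_neg, ← add_assoc,
      ← sub_eq_add_neg]
  -- `0 ≤ v`
  have hv0 : 0 ≤ v := by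
    rw [hle 0 v, hf0]
    intro i
    have h1 : f v i + f v i = f u i := by
      have h := hadd v v
      rw [hv] at h
      exact congrFun h.symm i
    have h2 : (0 : L i) ≤ f u i := by
      have h := (hle 0 u).mp hu0
      rw [hf0] at h
      exact h i
    have : (0 : L i) + 0 ≤ f v i + f v i := by
      rw [add_zero, h1]; exact h2
    exact double_le_double this
  have hvu : v ≤ u := by
    calc v = v + 0 := (add_zero v).symm
      _ ≤ v + v := add_le_add_right hv0 v
      _ = u := hv
  intro z hz0 hzu
  refine ⟨⟨hz0.trans le_sup_left, sup_le hzu hvu⟩, ?_, ?_⟩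
  · -- the square of `z ⊔ v` equals the square of `z`
    rw [hsq (z ⊔ v), hsq z, ← hv]
    apply hinj
    simp only [hsup, hadd, hfsub, hf0]
    funext i
    simp only [Pi.sup_apply, Pi.add_apply, Pi.sub_apply, Pi.zero_apply]
    exact comp_eq_lin (f v i) (f z i)
  · -- maximality
    intro y hy0 hyu hy
    rw [hsq y, hsq z, ← hv] at hy
    rw [hle y (z ⊔ v), hsup]
    have hy' := (hle _ _).mp hy
    simp only [hsup, hadd, hfsub, hf0] at hy'
    intro i
    have hi := hy' i
    simp only [Pi.sup_apply, Pi.add_apply, Pi.sub_apply, Pi.zero_apply] at hi ⊢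
    exact comp_le_lin hi
end
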